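/- Let Q be a stably supported quantale with support ς and unit e, and let a, b ∈ Q. If b ≤ e, b ≤ a a*, and a ≤ b a, then b = ς a. -/

import Mathlib

/-!
If `b ≤ e` then `b ≤ (ς b) b ≤ (ς b) e = ς b` and `ς b ≤ b b* ≤ b e* = b`, so `b = ς b`. Each of
`b ≤ a a*` and `a ≤ b a` bounds one support by the other through stability, hence
`ς b = ς a`.
-/

theorem monotone_of_map_sSup {α β : Type*} [CompleteLattice α] [CompleteLattice β] (f : α → β)
    (hf : ∀ T : Set α, f (sSup T) = sSup (f '' T)) : Monotone f :=
  OrderHomClass.mono (sSupHom.mk f hf)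

theorem involution_unit_eq {Q : Type*} (m : Q → Q → Q) (e : Q) (st : Q → Q)
    (hel : ∀ a, m e a = a) (hstst : ∀ a, st (st a) = a)
    (hstm : ∀ a b, st (m a b) = m (st b) (st a)) : st e = e := by
  have h := hstm e (st e)
  rwa [hel, hstst, hel, eq_comm] at h

section StablySupported

variable {Q : Type*} [CompleteLattice Q] (m : Q → Q → Q) (e : Q) (st sp : Q → Q)

theorem le_support_of_le_unit (hdistl : ∀ (a : Q) (T : Set Q), m a (sSup T) = sSup (m a '' T))
    (her : ∀ a, m a e = a) (hsp3 : ∀ a, a ≤ m (sp a) a) {b : Q} (hb : b ≤ e) : b ≤ sp b :=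
  calc b ≤ m (sp b) b := hsp3 b
    _ ≤ m (sp b) e := monotone_of_map_sSup _ (hdistl (sp b)) hb
    _ = sp b := her _

theorem support_le_of_le_unit (hdistl : ∀ (a : Q) (T : Set Q), m a (sSup T) = sSup (m a '' T))
    (her : ∀ a, m a e = a) (hste : st e = e) (hstsup : ∀ T : Set Q, st (sSup T) = sSup (st '' T))
    (hsp2 : ∀ a, sp a ≤ m a (st a)) {b : Q} (hb : b ≤ e) : sp b ≤ b :=
  calc sp b ≤ m b (st b) := hsp2 b
    _ ≤ m b (st e) := monotone_of_map_sSup _ (hdistl b) (monotone_of_map_sSup st hstsup hb)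
    _ = b := by rw [hste, her]

theorem support_le_support_of_le_mul (hspsup : ∀ T : Set Q, sp (sSup T) = sSup (sp '' T))
    (hstable : ∀ a b, sp (m a b) ≤ sp a) {a b c : Q} (h : a ≤ m b c) : sp a ≤ sp b :=
  (monotone_of_map_sSup sp hspsup h).trans (hstable b c)

end StablySupported

theorem stmt_3_general {Q : Type*} [CompleteLattice Q]
    (m : Q → Q → Q) (e : Q) (st : Q → Q) (sp : Q → Q)
    (hdistl : ∀ (a : Q) (T : Set Q), m a (sSup T) = sSup ((fun b => m a b) '' T))
    (hel : ∀ a : Q, m e a = a) (her : ∀ a : Q, m a e = a)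
    (hstsup : ∀ T : Set Q, st (sSup T) = sSup (st '' T))
    (hstst : ∀ a : Q, st (st a) = a)
    (hstm : ∀ a b : Q, st (m a b) = m (st b) (st a))
    (hspsup : ∀ T : Set Q, sp (sSup T) = sSup (sp '' T))
    (hsp2 : ∀ a : Q, sp a ≤ m a (st a))
    (hsp3 : ∀ a : Q, a ≤ m (sp a) a)
    (hstable : ∀ a b : Q, sp (m a b) ≤ sp a)
    (a b : Q) (h1 : b ≤ e) (h2 : b ≤ m a (st a)) (h3 : a ≤ m b a) :
    b = sp a := by
  have hste : st e = e := involution_unit_eq m e st hel hstst hstm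
  calc b = sp b := le_antisymm (le_support_of_le_unit m e sp hdistl her hsp3 h1)
        (support_le_of_le_unit m e st sp hdistl her hste hstsup hsp2 h1)
    _ = sp a := le_antisymm (support_le_support_of_le_mul m sp hspsup hstable h2)
        (support_le_support_of_le_mul m sp hspsup hstable h3)

/-- In a stably supported quantale, the support is characterized by
`b ≤ e`, `b ≤ a a*`, `a ≤ b a` (Lemma `prop:strongsupp`-1). -/
theorem stmt_3 {Q : Type*} [CompleteLattice Q]
    (m : Q → Q → Q) (e : Q) (st : Q → Q) (sp : Q → Q)
    (hassoc : ∀ a b c : Q, m (m a b) c = m a (m b c))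
    (hdistl : ∀ (a : Q) (T : Set Q), m a (sSup T) = sSup ((fun b => m a b) '' T))
    (hdistr : ∀ (b : Q) (T : Set Q), m (sSup T) b = sSup ((fun a => m a b) '' T))
    (hel : ∀ a : Q, m e a = a) (her : ∀ a : Q, m a e = a)
    (hstsup : ∀ T : Set Q, st (sSup T) = sSup (st '' T))
    (hstst : ∀ a : Q, st (st a) = a)
    (hstm : ∀ a b : Q, st (m a b) = m (st b) (st a))
    (hspsup : ∀ T : Set Q, sp (sSup T) = sSup (sp '' T))
    (hsp1 : ∀ a : Q, sp a ≤ e)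
    (hsp2 : ∀ a : Q, sp a ≤ m a (st a))
    (hsp3 : ∀ a : Q, a ≤ m (sp a) a)
    (hstable : ∀ a b : Q, sp (m a b) ≤ sp a)
    (a b : Q) (h1 : b ≤ e) (h2 : b ≤ m a (st a)) (h3 : a ≤ m b a) :
    b = sp a :=
  stmt_3_general m e st sp hdistl hel her hstsup hstst hstm hspsup hsp2 hsp3 hstable a b h1 h2 h3
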